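/- arXiv:math/0006036 — 7 statements merged into one kernel-verified Lean document; each statement's English description precedes it below -/
import Mathlib

section
/- Fix an even positive integer d. Define c : ℕ × ℕ × ℕ → ℝ by c(0, n0, n1) = (d/2 - n1)/(d/2 + 1 - n1) if n0 ≤ d/2 - 1 and n1 ≤ d/2, c(0, n0, n1) = 1 if n0 ≥ d/2 (with n1 ≤ d/2), and for r ≥ 1, c(r, n0, n1) = c(r-1, n0+1, n1) / (1 - c(r-1, n0, n1+1) + c(r-1, n0+1, n1)). Then for all r ≥ 1 and all n0, n1 with n0 ≤ d/2 - r and n1 ≤ d/2 - r, we have c(r-1, n0, n1+1) < c(r, n0, n1) < c(r-1, n0+1, n1). -/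
lemma key_lem (a b x : ℝ) (h0 : 0 ≤ a) (hab : a < b) (hb1 : b ≤ 1)
    (hx : x = b / (1 - a + b)) : a < x ∧ x < b := by
  have hb0 : 0 < b := lt_of_le_of_lt h0 hab
  have hD : 0 < 1 - a + b := by linarith
  constructor
  · rw [hx, lt_div_iff₀ hD]
    nlinarith [mul_pos (sub_pos.2 hab) (by linarith : (0:ℝ) < 1 - a)]
  · rw [hx, div_lt_iff₀ hD]
    nlinarith [mul_pos hb0 (sub_pos.2 hab)]

theorem stmt2 (d : ℕ) (hd : Even d) (hd0 : 0 < d) (c : ℕ → ℕ → ℕ → ℝ)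
    (hbase1 : ∀ n0 n1 : ℕ, n1 ≤ d / 2 → n0 ≤ d / 2 - 1 →
      c 0 n0 n1 = ((d : ℝ) / 2 - n1) / ((d : ℝ) / 2 + 1 - n1))
    (hbase2 : ∀ n0 n1 : ℕ, n1 ≤ d / 2 → d / 2 ≤ n0 → c 0 n0 n1 = 1)
    (hrec : ∀ r n0 n1 : ℕ,
      c (r + 1) n0 n1 = c r (n0 + 1) n1 / (1 - c r n0 (n1 + 1) + c r (n0 + 1) n1)) :
    ∀ r n0 n1 : ℕ, 1 ≤ r → n0 + r ≤ d / 2 → n1 + r ≤ d / 2 →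
      c (r - 1) n0 (n1 + 1) < c r n0 n1 ∧ c r n0 n1 < c (r - 1) (n0 + 1) n1 := by
  obtain ⟨m, hdm⟩ := hd
  have hd2 : d / 2 = m := by omega
  have hm1 : 1 ≤ m := by omega
  have hcast : (d : ℝ) / 2 = (m : ℝ) := by
    subst hdm; push_cast; ring
  rw [hd2] at hbase1 hbase2 ⊢
  rw [hcast] at hbase1
  -- combined invariant by induction on r
  have P : ∀ r : ℕ,
      (∀ n0 n1 : ℕ, n0 + r ≤ m → n1 + r ≤ m →
        0 ≤ c r n0 n1 ∧ c r n0 n1 ≤ 1) ∧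
      (∀ n0 n1 : ℕ, n0 + r + 1 ≤ m → n1 + r + 1 ≤ m →
        c r n0 (n1 + 1) < c r (n0 + 1) n1) := by
    intro r
    induction r with
    | zero =>
      constructor
      · intro n0 n1 h0 h1
        have hn1 : (n1 : ℝ) ≤ (m : ℝ) := by exact_mod_cast (by omega : n1 ≤ m)
        rcases Nat.lt_or_ge n0 m with h | h
        · rw [hbase1 n0 n1 (by omega) (by omega)]
          constructor
          · apply div_nonneg <;> linarith
          · rw [div_le_one (by linarith)]; linarith
        · rw [hbase2 n0 n1 (by omega) h]
          constructor <;> norm_num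
      · intro n0 n1 h0 h1
        have hn1 : (n1 : ℝ) + 1 ≤ (m : ℝ) := by exact_mod_cast (by omega : n1 + 1 ≤ m)
        have ha : c 0 n0 (n1 + 1) = ((m : ℝ) - (n1 + 1)) / ((m : ℝ) + 1 - (n1 + 1)) := by
          rw [hbase1 n0 (n1 + 1) (by omega) (by omega)]; push_cast; ring_nf
        rcases Nat.lt_or_ge (n0 + 1) m with h | h
        · rw [ha, hbase1 (n0 + 1) n1 (by omega) (by omega)]
          rw [div_lt_div_iff₀ (by linarith) (by linarith)]
          nlinarith
        · rw [ha, hbase2 (n0 + 1) n1 (by omega) h]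
          rw [div_lt_one (by linarith)]
          linarith
    | succ r ih =>
      obtain ⟨T, U⟩ := ih
      have inter : ∀ n0 n1 : ℕ, n0 + r + 1 ≤ m → n1 + r + 1 ≤ m →
          c r n0 (n1 + 1) < c (r + 1) n0 n1 ∧ c (r + 1) n0 n1 < c r (n0 + 1) n1 := by
        intro n0 n1 h0 h1
        have ha := T n0 (n1 + 1) (by omega) (by omega)
        have hb := T (n0 + 1) n1 (by omega) (by omega)
        have hab := U n0 n1 h0 h1
        exact key_lem _ _ _ ha.1 hab hb.2 (hrec r n0 n1)
      constructor
      · intro n0 n1 h0 h1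
        obtain ⟨l, u⟩ := inter n0 n1 (by omega) (by omega)
        have ha := T n0 (n1 + 1) (by omega) (by omega)
        have hb := T (n0 + 1) n1 (by omega) (by omega)
        constructor <;> linarith [ha.1, hb.2]
      · intro n0 n1 h0 h1
        have A := (inter n0 (n1 + 1) (by omega) (by omega)).2
        have B := (inter (n0 + 1) n1 (by omega) (by omega)).1
        linarith
  intro r n0 n1 hr h0 h1
  obtain ⟨s, rfl⟩ : ∃ s, r = s + 1 := ⟨r - 1, by omega⟩
  obtain ⟨T, U⟩ := P s
  have ha := T n0 (n1 + 1) (by omega) (by omega)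
  have hb := T (n0 + 1) n1 (by omega) (by omega)
  have hab := U n0 n1 (by omega) (by omega)
  simpa using key_lem _ _ _ ha.1 hab hb.2 (hrec s n0 n1)
end

section
/- Fix an even positive integer d. Define c_+ : ℕ × ℕ × ℕ → ℝ by c_+(0, n0, n1) = (d/2 - n1)/(d/2 + 1 - n1) if n0 ≤ d/2 - 1, c_+(0, n0, n1) = 1 if n0 ≥ d/2 (with n1 ≤ d/2), and for r ≥ 1, c_+(r, n0, n1) = min( c_+(r-1, n0+1, n1)/(1 - c_+(r-1, n0, n1+1) + c_+(r-1, n0+1, n1)), ((d - n0 - n1 - 1)·c_+(r-1, n0, n1+1) + 1)/(d - n0 - n1) ). Then for all r ≥ 1 and all n0, n1 ≤ d/2 - r, c_+(r-1, n0, n1+1) < c_+(r, n0, n1) < c_+(r-1, n0+1, n1). -/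
theorem stmt3 (d : ℕ) (hd : Even d) (hd0 : 0 < d) (cp : ℕ → ℕ → ℕ → ℝ)
    (hbase1 : ∀ n0 n1 : ℕ, n1 ≤ d / 2 → n0 ≤ d / 2 - 1 →
      cp 0 n0 n1 = ((d : ℝ) / 2 - n1) / ((d : ℝ) / 2 + 1 - n1))
    (hbase2 : ∀ n0 n1 : ℕ, n1 ≤ d / 2 → d / 2 ≤ n0 → cp 0 n0 n1 = 1)
    (hrec : ∀ r n0 n1 : ℕ,
      cp (r + 1) n0 n1 =
        min (cp r (n0 + 1) n1 / (1 - cp r n0 (n1 + 1) + cp r (n0 + 1) n1))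
          ((((d : ℝ) - n0 - n1 - 1) * cp r n0 (n1 + 1) + 1) / ((d : ℝ) - n0 - n1))) :
    ∀ r n0 n1 : ℕ, 1 ≤ r → n0 + r ≤ d / 2 → n1 + r ≤ d / 2 →
      cp (r - 1) n0 (n1 + 1) < cp r n0 n1 ∧ cp r n0 n1 < cp (r - 1) (n0 + 1) n1 := by
  set m := d / 2 with hm
  have hdm : (d : ℝ) = 2 * m := by
    obtain ⟨t, ht⟩ := hd
    have : m = t := by omega
    subst ht; rw [this]; push_cast; ring
  have hM2 : (d : ℝ) / 2 = (m : ℝ) := by rw [hdm]; ring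
  -- cross-level lemma, assuming bounds (S) and same-level monotonicity (C) at level r
  have hM : ∀ r : ℕ,
      (∀ n0 n1 : ℕ, n0 + r ≤ m → n1 + r ≤ m →
        0 ≤ cp r n0 n1 ∧ cp r n0 n1 ≤ 1 ∧ (n0 + r < m → cp r n0 n1 < 1) ∧
          (n1 + r < m → 0 < cp r n0 n1)) →
      (∀ n0 n1 : ℕ, n0 + r + 1 ≤ m → n1 + r + 1 ≤ m →
        cp r n0 (n1 + 1) < cp r (n0 + 1) n1) →
      ∀ n0 n1 : ℕ, n0 + r + 1 ≤ m → n1 + r + 1 ≤ m →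
        cp r n0 (n1 + 1) < cp (r + 1) n0 n1 ∧ cp (r + 1) n0 n1 < cp r (n0 + 1) n1 := by
    intro r hS hC n0 n1 h0 h1
    obtain ⟨hx0, hxle, hx1, -⟩ := hS n0 (n1 + 1) (by omega) (by omega)
    replace hx1 := hx1 (by omega)
    obtain ⟨hy0, hy1, -, hypos⟩ := hS (n0 + 1) n1 (by omega) (by omega)
    replace hypos := hypos (by omega)
    have hxy := hC n0 n1 h0 h1
    have hk : (2 : ℝ) ≤ (d : ℝ) - n0 - n1 := by
      have h2 : ((n0 + n1 + 2 : ℕ) : ℝ) ≤ ((2 * m : ℕ) : ℝ) := Nat.cast_le.mpr (by omega)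
      push_cast at h2
      rw [hdm]; linarith
    have hkpos : (0 : ℝ) < (d : ℝ) - n0 - n1 := by linarith
    set x := cp r n0 (n1 + 1) with hxdef
    set y := cp r (n0 + 1) n1 with hydef
    have hden : 0 < 1 - x + y := by linarith
    rw [hrec r n0 n1, ← hxdef, ← hydef]
    constructor
    · apply lt_min
      · rw [lt_div_iff₀ hden]
        nlinarith [mul_pos (sub_pos.2 hxy) (sub_pos.2 hx1)]
      · rw [lt_div_iff₀ hkpos]
        nlinarith
    · calc min (y / (1 - x + y)) ((((d : ℝ) - n0 - n1 - 1) * x + 1) / ((d : ℝ) - n0 - n1))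
          ≤ y / (1 - x + y) := min_le_left _ _
        _ < y := by
          rw [div_lt_iff₀ hden]
          nlinarith [mul_pos hypos (sub_pos.2 hxy)]
  -- joint induction: S(r) ∧ C(r)
  have key : ∀ r : ℕ,
      (∀ n0 n1 : ℕ, n0 + r ≤ m → n1 + r ≤ m →
        0 ≤ cp r n0 n1 ∧ cp r n0 n1 ≤ 1 ∧ (n0 + r < m → cp r n0 n1 < 1) ∧
          (n1 + r < m → 0 < cp r n0 n1)) ∧
      (∀ n0 n1 : ℕ, n0 + r + 1 ≤ m → n1 + r + 1 ≤ m →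
        cp r n0 (n1 + 1) < cp r (n0 + 1) n1) := by
    intro r
    induction r with
    | zero =>
      constructor
      · intro n0 n1 h0 h1
        by_cases hn : m ≤ n0
        · rw [hbase2 n0 n1 (by omega) (by omega)]
          refine ⟨zero_le_one, le_rfl, fun h => absurd h (by omega), fun _ => one_pos⟩
        · rw [hbase1 n0 n1 (by omega) (by omega), hM2]
          have hc1 : (n1 : ℝ) ≤ m := Nat.cast_le.mpr (by omega)
          have hdenpos : (0 : ℝ) < (m : ℝ) + 1 - n1 := by linarith
          refine ⟨div_nonneg (by linarith) hdenpos.le, ?_, fun _ => ?_, fun h => ?_⟩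
          · rw [div_le_one hdenpos]; linarith
          · rw [div_lt_one hdenpos]; linarith
          · have hc2 : (n1 : ℝ) + 1 ≤ m := by
              have := (Nat.cast_le (α := ℝ)).mpr (show n1 + 1 ≤ m by omega)
              push_cast at this; linarith
            exact div_pos (by linarith) hdenpos
      · intro n0 n1 h0 h1
        have hc2 : (n1 : ℝ) + 1 ≤ m := by
          have := (Nat.cast_le (α := ℝ)).mpr (show n1 + 1 ≤ m by omega)
          push_cast at this; linarith
        rw [hbase1 n0 (n1 + 1) (by omega) (by omega), hM2]
        push_cast
        have hdp : (0 : ℝ) < (m : ℝ) + 1 - (n1 + 1) := by linarith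
        by_cases h2 : m ≤ n0 + 1
        · rw [hbase2 (n0 + 1) n1 (by omega) h2]
          rw [div_lt_one hdp]; linarith
        · rw [hbase1 (n0 + 1) n1 (by omega) (by omega), hM2]
          have hdp2 : (0 : ℝ) < (m : ℝ) + 1 - n1 := by linarith
          rw [div_lt_div_iff₀ hdp hdp2]
          nlinarith
    | succ r ih =>
      obtain ⟨hS, hC⟩ := ih
      have hM' := hM r hS hC
      constructor
      · intro n0 n1 h0 h1
        obtain ⟨hx0, hxle, hx1, -⟩ := hS n0 (n1 + 1) (by omega) (by omega)
        replace hx1 := hx1 (by omega)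
        obtain ⟨hy0, hy1, -, hypos⟩ := hS (n0 + 1) n1 (by omega) (by omega)
        replace hypos := hypos (by omega)
        have hk : (2 : ℝ) ≤ (d : ℝ) - n0 - n1 := by
          have h2 : ((n0 + n1 + 2 : ℕ) : ℝ) ≤ ((2 * m : ℕ) : ℝ) := Nat.cast_le.mpr (by omega)
          push_cast at h2
          rw [hdm]; linarith
        have hkpos : (0 : ℝ) < (d : ℝ) - n0 - n1 := by linarith
        set x := cp r n0 (n1 + 1) with hxdef
        set y := cp r (n0 + 1) n1 with hydef
        have hden : 0 < 1 - x + y := by linarith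
        rw [hrec r n0 n1, ← hxdef, ← hydef]
        have hApos : 0 < y / (1 - x + y) := div_pos hypos hden
        have hBpos : 0 < (((d : ℝ) - n0 - n1 - 1) * x + 1) / ((d : ℝ) - n0 - n1) := by
          apply div_pos _ hkpos
          nlinarith [mul_nonneg (by linarith : (0:ℝ) ≤ (d : ℝ) - n0 - n1 - 1) hx0]
        have hB1 : (((d : ℝ) - n0 - n1 - 1) * x + 1) / ((d : ℝ) - n0 - n1) < 1 := by
          rw [div_lt_one hkpos]
          nlinarith [mul_pos (by linarith : (0:ℝ) < (d : ℝ) - n0 - n1 - 1) (by linarith : (0:ℝ) < 1 - x)]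
        refine ⟨(lt_min hApos hBpos).le, ((min_le_right _ _).trans hB1.le), fun _ => lt_of_le_of_lt (min_le_right _ _) hB1, fun _ => lt_min hApos hBpos⟩
      · intro n0 n1 h0 h1
        calc cp (r + 1) n0 (n1 + 1) < cp r (n0 + 1) (n1 + 1) :=
              (hM' n0 (n1 + 1) (by omega) (by omega)).2
          _ < cp (r + 1) (n0 + 1) n1 := (hM' (n0 + 1) n1 (by omega) (by omega)).1
  intro r n0 n1 hr h0 h1
  obtain ⟨s, rfl⟩ : ∃ s, r = s + 1 := ⟨r - 1, by omega⟩
  simp only [Nat.add_sub_cancel]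
  exact hM s (key s).1 (key s).2 n0 n1 (by omega) (by omega)
end

section
/- With c and c_+ defined as in the recurrences above, for any r, n0, n1 ≥ 0 with r + n0 + n1 ≤ d/2 - √d + 3/2, we have c(r, n0, n1) = c_+(r, n0, n1). In other words, the positive semidefiniteness constraint does not change these values for roughly the first d/2 - √d iterations. -/
set_option maxHeartbeats 8000000 in
theorem stmt7 (d : ℕ) (hd : Even d) (hd0 : 0 < d) (c cp : ℕ → ℕ → ℕ → ℝ)
    (hbase1 : ∀ n0 n1 : ℕ, n1 ≤ d / 2 → n0 ≤ d / 2 - 1 →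
      c 0 n0 n1 = ((d : ℝ) / 2 - n1) / ((d : ℝ) / 2 + 1 - n1))
    (hbase2 : ∀ n0 n1 : ℕ, n1 ≤ d / 2 → d / 2 ≤ n0 → c 0 n0 n1 = 1)
    (hrec : ∀ r n0 n1 : ℕ,
      c (r + 1) n0 n1 = c r (n0 + 1) n1 / (1 - c r n0 (n1 + 1) + c r (n0 + 1) n1))
    (hbase1p : ∀ n0 n1 : ℕ, n1 ≤ d / 2 → n0 ≤ d / 2 - 1 →
      cp 0 n0 n1 = ((d : ℝ) / 2 - n1) / ((d : ℝ) / 2 + 1 - n1))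
    (hbase2p : ∀ n0 n1 : ℕ, n1 ≤ d / 2 → d / 2 ≤ n0 → cp 0 n0 n1 = 1)
    (hrecp : ∀ r n0 n1 : ℕ,
      cp (r + 1) n0 n1 =
        min (cp r (n0 + 1) n1 / (1 - cp r n0 (n1 + 1) + cp r (n0 + 1) n1))
          ((((d : ℝ) - n0 - n1 - 1) * cp r n0 (n1 + 1) + 1) / ((d : ℝ) - n0 - n1))) :
    ∀ r n0 n1 : ℕ,
      ((r + n0 + n1 : ℕ) : ℝ) ≤ (d : ℝ) / 2 - Real.sqrt d + 3 / 2 →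
      c r n0 n1 = cp r n0 n1 := by
  have hm : ((d / 2 : ℕ) : ℝ) = (d : ℝ) / 2 := by
    obtain ⟨k, rfl⟩ := hd
    have h2 : (k + k) / 2 = k := by omega
    rw [h2]; push_cast; ring
  have hsq : Real.sqrt d * Real.sqrt d = (d : ℝ) :=
    Real.mul_self_sqrt (by positivity)
  have hbase : ∀ n0 n1 : ℕ, n1 ≤ d / 2 → c 0 n0 n1 = cp 0 n0 n1 := by
    intro n0 n1 hn1
    rcases le_or_gt (d / 2) n0 with h | h
    · rw [hbase2 n0 n1 hn1 h, hbase2p n0 n1 hn1 h]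
    · rw [hbase1 n0 n1 hn1 (by omega), hbase1p n0 n1 hn1 (by omega)]
  rcases lt_or_ge d 4 with hd4 | hd4
  · -- d = 2
    have hd2 : d = 2 := by
      obtain ⟨k, rfl⟩ := hd; omega
    subst hd2
    have h14 : (1.4 : ℝ) ≤ Real.sqrt 2 := by
      nlinarith [Real.sq_sqrt (by norm_num : (0:ℝ) ≤ 2), Real.sqrt_nonneg 2]
    intro r n0 n1 hreg
    have hle : r + n0 + n1 ≤ 1 := by
      by_contra hcon
      have h2 : (2 : ℝ) ≤ ((r + n0 + n1 : ℕ) : ℝ) := by exact_mod_cast by omega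
      norm_num at hreg
      push_cast at h2
      linarith
    have hcase : r = 0 ∨ (r = 1 ∧ n0 = 0 ∧ n1 = 0) := by omega
    rcases hcase with rfl | ⟨rfl, rfl, rfl⟩
    · exact hbase n0 n1 (by omega)
    · 
      rw [hrec 0 0 0, hrecp 0 0 0, hbase2 1 0 (by norm_num) (by norm_num),
        hbase2p 1 0 (by norm_num) (by norm_num), hbase1 0 1 (by norm_num) (by norm_num),
        hbase1p 0 1 (by norm_num) (by norm_num)]
      norm_num
  · -- main case: d ≥ 4
    have hdR : (4 : ℝ) ≤ (d : ℝ) := by exact_mod_cast hd4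
    have hs2 : (2 : ℝ) ≤ Real.sqrt d := by
      nlinarith [hsq, Real.sqrt_nonneg d]
    -- n0-independence
    have hindep : ∀ r n0 n1 : ℕ,
        ((r : ℝ) + n0 + n1) + 1 + Real.sqrt d ≤ (d : ℝ) / 2 + 3 / 2 →
        c r (n0 + 1) n1 = c r n0 n1 := by
      intro r
      induction r with
      | zero =>
        intro n0 n1 h
        norm_num at h
        have hn0 : (0:ℝ) ≤ (n0 : ℝ) := Nat.cast_nonneg n0
        have hn1 : (0:ℝ) ≤ (n1 : ℝ) := Nat.cast_nonneg n1
        have h1 : (n0 : ℝ) + 2 < ((d / 2 : ℕ) : ℝ) + 1 := by rw [hm]; linarith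
        have h2 : n0 + 2 < d / 2 + 1 := by exact_mod_cast h1
        have h3 : (n1 : ℝ) < ((d / 2 : ℕ) : ℝ) := by rw [hm]; linarith
        have h4 : n1 ≤ d / 2 := by
          have : n1 < d / 2 := by exact_mod_cast h3
          omega
        rw [hbase1 (n0 + 1) n1 h4 (by omega), hbase1 n0 n1 h4 (by omega)]
      | succ r ih =>
        intro n0 n1 h
        push_cast at h
        rw [hrec r (n0 + 1) n1, hrec r n0 n1,
          ih (n0 + 1) n1 (by push_cast; linarith), ih n0 (n1 + 1) (by push_cast; linarith)]
    -- chained n0-independence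
    have hchain : ∀ n0 r n1 : ℕ,
        ((r : ℝ) + n0 + n1) + Real.sqrt d ≤ (d : ℝ) / 2 + 3 / 2 →
        c r n0 n1 = c r 0 n1 := by
      intro n0
      induction n0 with
      | zero => intro r n1 _; rfl
      | succ k ih =>
        intro r n1 h
        push_cast at h
        rw [hindep r k n1 (by push_cast; linarith), ih r n1 (by push_cast; linarith)]
    -- invariants Q and G
    have hQG : ∀ r n1 : ℕ,
        (((r : ℝ) + n1) + Real.sqrt d ≤ (d : ℝ) / 2 + 3 / 2 →
          0 < 1 - c r 0 n1 ∧ (1 - c r 0 n1) * ((d : ℝ) / 2 + 1 - n1 - r) ≤ 1) ∧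
        (((r : ℝ) + n1) + 1 + Real.sqrt d ≤ (d : ℝ) / 2 + 3 / 2 →
          c r 0 (n1 + 1) ≤ c r 0 n1 ∧
          1 - c r 0 (n1 + 1) ≤ (1 - c r 0 n1) + (1 - c r 0 n1) * (1 - c r 0 (n1 + 1))) := by
      intro r
      induction r with
      | zero =>
        intro n1
        have hval : ∀ k : ℕ, (k : ℝ) + 1 / 2 ≤ (d : ℝ) / 2 →
            c 0 0 k = ((d : ℝ) / 2 - k) / ((d : ℝ) / 2 + 1 - k) := by
          intro k hk
          have h1 : (k : ℝ) < ((d / 2 : ℕ) : ℝ) := by rw [hm]; linarith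
          have h2 : k ≤ d / 2 := by
            have : k < d / 2 := by exact_mod_cast h1
            omega
          exact hbase1 0 k h2 (by omega)
        constructor
        · intro h
          norm_num at h
          have hk : (n1 : ℝ) + 1 / 2 ≤ (d : ℝ) / 2 := by linarith
          have hden : (0 : ℝ) < (d : ℝ) / 2 + 1 - n1 := by linarith
          have he : 1 - ((d : ℝ) / 2 - n1) / ((d : ℝ) / 2 + 1 - n1)
              = 1 / ((d : ℝ) / 2 + 1 - n1) := by
            rw [eq_div_iff (ne_of_gt hden), sub_mul, div_mul_cancel₀ _ (ne_of_gt hden)]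
            ring
          rw [hval n1 hk, he]
          refine ⟨by positivity, ?_⟩
          rw [div_mul_eq_mul_div, div_le_one hden]
          push_cast
          linarith
        · intro h
          norm_num at h
          have hk1 : (n1 : ℝ) + 1 / 2 ≤ (d : ℝ) / 2 := by linarith
          have hk2 : ((n1 + 1 : ℕ) : ℝ) + 1 / 2 ≤ (d : ℝ) / 2 := by push_cast; linarith
          rw [hval n1 hk1, hval (n1 + 1) hk2]
          push_cast
          have hden1 : (0 : ℝ) < (d : ℝ) / 2 + 1 - n1 := by linarith
          have hden2 : (0 : ℝ) < (d : ℝ) / 2 + 1 - ((n1 : ℝ) + 1) := by linarith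
          constructor
          · rw [div_le_div_iff₀ hden2 hden1]
            nlinarith
          · have he1 : 1 - ((d : ℝ) / 2 - n1) / ((d : ℝ) / 2 + 1 - n1)
                = 1 / ((d : ℝ) / 2 + 1 - n1) := by
              rw [eq_div_iff (ne_of_gt hden1), sub_mul, div_mul_cancel₀ _ (ne_of_gt hden1)]
              ring
            have he2 : 1 - ((d : ℝ) / 2 - ((n1 : ℝ) + 1)) / ((d : ℝ) / 2 + 1 - ((n1 : ℝ) + 1))
                = 1 / ((d : ℝ) / 2 + 1 - ((n1 : ℝ) + 1)) := by
              rw [eq_div_iff (ne_of_gt hden2), sub_mul, div_mul_cancel₀ _ (ne_of_gt hden2)]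
              ring
            rw [he1, he2, div_mul_div_comm, one_mul,
              div_add_div _ _ (ne_of_gt hden1) (ne_of_gt (mul_pos hden1 hden2)),
              div_le_div_iff₀ hden2 (mul_pos hden1 (mul_pos hden1 hden2))]
            exact le_of_eq (by ring)
      | succ r ih =>
        intro n1
        constructor
        · -- Q step
          intro h
          push_cast at h
          obtain ⟨ha0, ha1⟩ := (ih n1).1 (by linarith)
          obtain ⟨hb0, hb1⟩ := (ih (n1 + 1)).1 (by push_cast; linarith)
          have hG := (ih n1).2 (by linarith)
          push_cast at hb1
          have hrw : c (r + 1) 0 n1 = c r 0 n1 / (1 - c r 0 (n1 + 1) + c r 0 n1) := by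
            rw [hrec r 0 n1, hindep r 0 n1 (by push_cast; linarith)]
          have hden : 0 < 1 - c r 0 (n1 + 1) + c r 0 n1 := by linarith [hG.1]
          have hu : 1 - c (r + 1) 0 n1
              = (1 - c r 0 (n1 + 1)) / (1 - c r 0 (n1 + 1) + c r 0 n1) := by
            rw [hrw, eq_div_iff (ne_of_gt hden), sub_mul, div_mul_cancel₀ _ (ne_of_gt hden)]
            ring
          constructor
          · rw [hu]; exact div_pos hb0 hden
          · rw [hu]
            push_cast
            have h1 : (1 - c r 0 (n1 + 1)) / (1 - c r 0 (n1 + 1) + c r 0 n1)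
                ≤ 1 - c r 0 (n1 + 1) := div_le_self hb0.le (by linarith [hG.1])
            have h2 : (0 : ℝ) ≤ (d : ℝ) / 2 + 1 - n1 - (r + 1) := by linarith
            calc (1 - c r 0 (n1 + 1)) / (1 - c r 0 (n1 + 1) + c r 0 n1)
                  * ((d : ℝ) / 2 + 1 - n1 - (r + 1))
                ≤ (1 - c r 0 (n1 + 1)) * ((d : ℝ) / 2 + 1 - n1 - (r + 1)) :=
                  mul_le_mul_of_nonneg_right h1 h2
              _ ≤ 1 := by linarith [hb1]
        · -- G step
          intro h
          push_cast at h
          obtain ⟨ha0, ha1⟩ := (ih n1).1 (by linarith)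
          obtain ⟨hb0, hb1⟩ := (ih (n1 + 1)).1 (by push_cast; linarith)
          obtain ⟨hc0, hc1⟩ := (ih (n1 + 2)).1 (by push_cast; linarith)
          have hGab := (ih n1).2 (by linarith)
          have hGbc := (ih (n1 + 1)).2 (by push_cast; linarith)
          push_cast at hb1 hc1
          simp only [show n1 + 1 + 1 = n1 + 2 from rfl] at hGbc
          have hden1 : 0 < 1 - c r 0 (n1 + 1) + c r 0 n1 := by linarith [hGab.1]
          have hden2 : 0 < 1 - c r 0 (n1 + 2) + c r 0 (n1 + 1) := by linarith [hGbc.1]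
          have hrw1 : c (r + 1) 0 n1 = c r 0 n1 / (1 - c r 0 (n1 + 1) + c r 0 n1) := by
            rw [hrec r 0 n1, hindep r 0 n1 (by push_cast; linarith)]
          have hrw2 : c (r + 1) 0 (n1 + 1)
              = c r 0 (n1 + 1) / (1 - c r 0 (n1 + 2) + c r 0 (n1 + 1)) := by
            rw [hrec r 0 (n1 + 1), hindep r 0 (n1 + 1) (by push_cast; linarith)]
          -- size bounds
          have hta : Real.sqrt d + 3 / 2 ≤ (d : ℝ) / 2 + 1 - n1 - r := by linarith
          have htb : Real.sqrt d + 1 / 2 ≤ (d : ℝ) / 2 + 1 - ((n1 : ℝ) + 1) - r := by linarith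
          have htc : Real.sqrt d - 1 / 2 ≤ (d : ℝ) / 2 + 1 - ((n1 : ℝ) + 2) - r := by linarith
          have haA : 1 - c r 0 n1 ≤ 2 / 7 := by
            nlinarith [ha1, mul_nonneg ha0.le
              (by linarith : (0:ℝ) ≤ (d : ℝ) / 2 + 1 - n1 - r - 7 / 2)]
          have hbB : 1 - c r 0 (n1 + 1) ≤ 2 / 5 := by
            nlinarith [hb1, mul_nonneg hb0.le
              (by linarith : (0:ℝ) ≤ (d : ℝ) / 2 + 1 - ((n1 : ℝ) + 1) - r - 5 / 2)]
          have hcC : 1 - c r 0 (n1 + 2) ≤ 2 / 3 := by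
            nlinarith [hc1, mul_nonneg hc0.le
              (by linarith : (0:ℝ) ≤ (d : ℝ) / 2 + 1 - ((n1 : ℝ) + 2) - r - 3 / 2)]
          have key1 : (0:ℝ) ≤ (1 - c r 0 n1) + (1 - c r 0 (n1 + 1)) * (1 - c r 0 (n1 + 1))
              - (1 - c r 0 (n1 + 1)) := by
            nlinarith [hGab.2, mul_nonneg (sub_nonneg.mpr hGab.1) hb0.le]
          have key2 : (0:ℝ) ≤ 1 - (1 - c r 0 n1) - (1 - c r 0 (n1 + 1)) := by linarith
          have key3 : (0:ℝ) ≤ (1 - c r 0 (n1 + 1))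
              - (1 - c r 0 (n1 + 2)) * (1 - (1 - c r 0 (n1 + 1))) := by
            nlinarith [hGbc.2]
          have hBpos : (0:ℝ) < c r 0 (n1 + 1) := by linarith
          constructor
          · rw [hrw1, hrw2, div_le_div_iff₀ hden2 hden1]
            nlinarith [mul_le_mul hGab.1 (by linarith [hGbc.1] :
                1 - c r 0 (n1 + 1) ≤ 1 - c r 0 (n1 + 2)) hb0.le
                (by linarith : (0:ℝ) ≤ c r 0 n1)]
          · rw [hrw1, hrw2]
            have he1 : 1 - c r 0 n1 / (1 - c r 0 (n1 + 1) + c r 0 n1)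
                = (1 - c r 0 (n1 + 1)) / (1 - c r 0 (n1 + 1) + c r 0 n1) := by
              rw [eq_div_iff (ne_of_gt hden1), sub_mul, div_mul_cancel₀ _ (ne_of_gt hden1)]
              ring
            have he2 : 1 - c r 0 (n1 + 1) / (1 - c r 0 (n1 + 2) + c r 0 (n1 + 1))
                = (1 - c r 0 (n1 + 2)) / (1 - c r 0 (n1 + 2) + c r 0 (n1 + 1)) := by
              rw [eq_div_iff (ne_of_gt hden2), sub_mul, div_mul_cancel₀ _ (ne_of_gt hden2)]
              ring
            rw [he1, he2]
            have hpoly : (1 - c r 0 (n1 + 2)) * (1 - c r 0 (n1 + 1) + c r 0 n1)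
                ≤ (1 - c r 0 (n1 + 1)) * (1 - c r 0 (n1 + 2) + c r 0 (n1 + 1))
                  + (1 - c r 0 (n1 + 1)) * (1 - c r 0 (n1 + 2)) := by
              nlinarith [mul_nonneg hb0.le key1, mul_nonneg key2 key3, hBpos]
            have step : (1 - c r 0 (n1 + 2)) / (1 - c r 0 (n1 + 2) + c r 0 (n1 + 1))
                ≤ ((1 - c r 0 (n1 + 1)) * (1 - c r 0 (n1 + 2) + c r 0 (n1 + 1))
                    + (1 - c r 0 (n1 + 1)) * (1 - c r 0 (n1 + 2)))
                  / ((1 - c r 0 (n1 + 1) + c r 0 n1)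
                    * (1 - c r 0 (n1 + 2) + c r 0 (n1 + 1))) := by
              rw [div_le_div_iff₀ hden2 (mul_pos hden1 hden2)]
              calc (1 - c r 0 (n1 + 2))
                    * ((1 - c r 0 (n1 + 1) + c r 0 n1) * (1 - c r 0 (n1 + 2) + c r 0 (n1 + 1)))
                  = ((1 - c r 0 (n1 + 2)) * (1 - c r 0 (n1 + 1) + c r 0 n1))
                    * (1 - c r 0 (n1 + 2) + c r 0 (n1 + 1)) := by ring
                _ ≤ ((1 - c r 0 (n1 + 1)) * (1 - c r 0 (n1 + 2) + c r 0 (n1 + 1))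
                      + (1 - c r 0 (n1 + 1)) * (1 - c r 0 (n1 + 2)))
                    * (1 - c r 0 (n1 + 2) + c r 0 (n1 + 1)) :=
                  mul_le_mul_of_nonneg_right hpoly hden2.le
            have eqr : ((1 - c r 0 (n1 + 1)) * (1 - c r 0 (n1 + 2) + c r 0 (n1 + 1))
                  + (1 - c r 0 (n1 + 1)) * (1 - c r 0 (n1 + 2)))
                / ((1 - c r 0 (n1 + 1) + c r 0 n1)
                  * (1 - c r 0 (n1 + 2) + c r 0 (n1 + 1)))
                = (1 - c r 0 (n1 + 1)) / (1 - c r 0 (n1 + 1) + c r 0 n1)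
                  + (1 - c r 0 (n1 + 1)) / (1 - c r 0 (n1 + 1) + c r 0 n1)
                    * ((1 - c r 0 (n1 + 2)) / (1 - c r 0 (n1 + 2) + c r 0 (n1 + 1))) := by
              field_simp
            rw [← eqr]
            exact step
    -- main equality
    have main : ∀ r n0 n1 : ℕ,
        ((r : ℝ) + n0 + n1) + Real.sqrt d ≤ (d : ℝ) / 2 + 3 / 2 →
        c r n0 n1 = cp r n0 n1 := by
      intro r
      induction r with
      | zero =>
        intro n0 n1 h
        norm_num at h
        have h1 : (n1 : ℝ) < ((d / 2 : ℕ) : ℝ) := by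
          rw [hm]; nlinarith [Nat.cast_nonneg (α := ℝ) n0]
        have h2 : n1 < d / 2 := by exact_mod_cast h1
        exact hbase n0 n1 (by omega)
      | succ r ih =>
        intro n0 n1 h
        push_cast at h
        have hn0 : (0:ℝ) ≤ (n0 : ℝ) := Nat.cast_nonneg n0
        have hn1 : (0:ℝ) ≤ (n1 : ℝ) := Nat.cast_nonneg n1
        have hr : (0:ℝ) ≤ (r : ℝ) := Nat.cast_nonneg r
        have hA : c r (n0 + 1) n1 = c r 0 n1 :=
          hchain (n0 + 1) r n1 (by push_cast; linarith)
        have hB : c r n0 (n1 + 1) = c r 0 (n1 + 1) :=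
          hchain n0 r (n1 + 1) (by push_cast; linarith)
        obtain ⟨ha0, ha1⟩ := (hQG r n1).1 (by linarith)
        obtain ⟨hb0, hb1⟩ := (hQG r (n1 + 1)).1 (by push_cast; linarith)
        have hG := (hQG r n1).2 (by linarith)
        push_cast at hb1
        have hg1 := hG.1
        have hg2 := hG.2
        -- bounds
        have hta : Real.sqrt d + 1 / 2 ≤ (d : ℝ) / 2 + 1 - n1 - r := by linarith
        have htb : Real.sqrt d - 1 / 2 ≤ (d : ℝ) / 2 - n1 - r := by linarith
        have hb1' : (1 - c r 0 (n1 + 1)) * ((d : ℝ) / 2 - n1 - r) ≤ 1 := by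
          nlinarith [hb1]
        -- key: (D-1)(A-B) ≤ 1
        have k2 : c r 0 n1 - c r 0 (n1 + 1) ≤ (1 - c r 0 n1) * (1 - c r 0 (n1 + 1)) := by
          linarith
        have k3 : (d : ℝ) - n0 - n1 - 1
            ≤ ((d : ℝ) / 2 + 1 - n1 - r) * ((d : ℝ) / 2 - n1 - r) := by
          nlinarith [mul_le_mul hta htb (by linarith : (0:ℝ) ≤ Real.sqrt d - 1/2)
            (by linarith : (0:ℝ) ≤ (d : ℝ) / 2 + 1 - n1 - r), hsq]
        have k1 : ((1 - c r 0 n1) * ((d : ℝ) / 2 + 1 - n1 - r))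
            * ((1 - c r 0 (n1 + 1)) * ((d : ℝ) / 2 - n1 - r)) ≤ 1 := by
          nlinarith [mul_le_mul ha1 hb1' (mul_nonneg hb0.le (by linarith))
            (by norm_num : (0:ℝ) ≤ 1)]
        have hD1 : ((d : ℝ) - n0 - n1 - 1) * (c r 0 n1 - c r 0 (n1 + 1)) ≤ 1 := by
          have m1 : ((d : ℝ) - n0 - n1 - 1) * (c r 0 n1 - c r 0 (n1 + 1))
              ≤ (((d : ℝ) / 2 + 1 - n1 - r) * ((d : ℝ) / 2 - n1 - r))
                * (c r 0 n1 - c r 0 (n1 + 1)) :=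
            mul_le_mul_of_nonneg_right k3 (by linarith)
          have m2 : (((d : ℝ) / 2 + 1 - n1 - r) * ((d : ℝ) / 2 - n1 - r))
              * (c r 0 n1 - c r 0 (n1 + 1))
              ≤ (((d : ℝ) / 2 + 1 - n1 - r) * ((d : ℝ) / 2 - n1 - r))
                * ((1 - c r 0 n1) * (1 - c r 0 (n1 + 1))) :=
            mul_le_mul_of_nonneg_left k2 (mul_nonneg (by linarith) (by linarith))
          have m3 : (((d : ℝ) / 2 + 1 - n1 - r) * ((d : ℝ) / 2 - n1 - r))
              * ((1 - c r 0 n1) * (1 - c r 0 (n1 + 1)))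
              = ((1 - c r 0 n1) * ((d : ℝ) / 2 + 1 - n1 - r))
                * ((1 - c r 0 (n1 + 1)) * ((d : ℝ) / 2 - n1 - r)) := by ring
          linarith [m3.le, m3.ge]
        have hden : (0:ℝ) < 1 - c r 0 (n1 + 1) + c r 0 n1 := by linarith
        have hD : (0:ℝ) < (d : ℝ) - n0 - n1 := by linarith
        have hLR : c r 0 n1 / (1 - c r 0 (n1 + 1) + c r 0 n1)
            ≤ (((d : ℝ) - n0 - n1 - 1) * c r 0 (n1 + 1) + 1) / ((d : ℝ) - n0 - n1) := by
          rw [div_le_div_iff₀ hden hD]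
          have key : (((d : ℝ) - n0 - n1 - 1) * c r 0 (n1 + 1) + 1)
                * (1 - c r 0 (n1 + 1) + c r 0 n1)
              - c r 0 n1 * ((d : ℝ) - n0 - n1)
              = (1 - c r 0 (n1 + 1))
                * (1 - ((d : ℝ) - n0 - n1 - 1) * (c r 0 n1 - c r 0 (n1 + 1))) := by
            ring
          nlinarith [mul_nonneg hb0.le (by linarith :
            (0:ℝ) ≤ 1 - ((d : ℝ) - n0 - n1 - 1) * (c r 0 n1 - c r 0 (n1 + 1)))]
        rw [hrec r n0 n1, hrecp r n0 n1, ← ih (n0 + 1) n1 (by push_cast; linarith),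
          ← ih n0 (n1 + 1) (by push_cast; linarith), hA, hB]
        exact (min_eq_left hLR).symm
    intro r n0 n1 hreg
    push_cast at hreg
    exact main r n0 n1 (by linarith)
end

section
/- For d ≥ 2, define P(d-1) = {x ∈ ℝ^d : ‖x - (1/2)e‖₁ ≤ (d-1)/2}. P(d-1) is the intersection of the 2^d half-spaces H_σ = {x : Σ_i σ_i (x_i - 1/2) ≤ (d-1)/2} over sign vectors σ ∈ {−1, 1}^d. Then P(d-1) contains no 0-1 point, but for each sign vector σ, the intersection of the 2^d − 1 half-spaces H_τ with τ ≠ σ contains a 0-1 point (namely the point x with x_i = 1 if σ_i = 1 and x_i = 0 if σ_i = −1). -/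
theorem stmt13 (d : ℕ) (hd : 2 ≤ d) :
    (∀ x : Fin d → ℝ,
      (∀ σ : Fin d → ℝ, (∀ i, σ i = 1 ∨ σ i = -1) →
        ∑ i, σ i * (x i - 1 / 2) ≤ ((d : ℝ) - 1) / 2) →
      ¬(∀ i, x i = 0 ∨ x i = 1)) ∧
    (∀ σ : Fin d → ℝ, (∀ i, σ i = 1 ∨ σ i = -1) →
      (∀ i, (if σ i = 1 then (1 : ℝ) else 0) = 0 ∨ (if σ i = 1 then (1 : ℝ) else 0) = 1) ∧
      (∀ τ : Fin d → ℝ, (∀ i, τ i = 1 ∨ τ i = -1) → τ ≠ σ →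
        ∑ i, τ i * ((if σ i = 1 then (1 : ℝ) else 0) - 1 / 2) ≤ ((d : ℝ) - 1) / 2)) := by
  constructor
  · intro x hx hx01
    have h := hx (fun i => if x i = 1 then 1 else -1)
      (by intro i; by_cases h : x i = 1 <;> simp [h])
    have heq : ∀ i ∈ Finset.univ, (if x i = 1 then (1:ℝ) else -1) * (x i - 1/2) = 1/2 := by
      intro i _
      rcases hx01 i with h0 | h1
      · have hne : x i ≠ 1 := by rw [h0]; norm_num
        rw [if_neg hne, h0]; ring
      · rw [if_pos h1, h1]; ring
    rw [Finset.sum_congr rfl heq, Finset.sum_const, Finset.card_univ, Fintype.card_fin] at h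
    have hd1 : (2:ℝ) ≤ d := by exact_mod_cast hd
    simp only [nsmul_eq_mul] at h
    linarith
  · intro σ hσ
    refine ⟨fun i => by by_cases h : σ i = 1 <;> simp [h], ?_⟩
    intro τ hτ hne
    have hterm : ∀ i ∈ Finset.univ, τ i * ((if σ i = 1 then (1:ℝ) else 0) - 1/2)
        = τ i * σ i / 2 := by
      intro i _
      rcases hσ i with h | h
      · rw [if_pos h, h]; ring
      · have hne1 : σ i ≠ 1 := by rw [h]; norm_num
        rw [if_neg hne1, h]; ring
    obtain ⟨j, hj⟩ := Function.ne_iff.mp hne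
    have hle : ∀ i ∈ Finset.univ.erase j, τ i * σ i / 2 ≤ 1/2 := by
      intro i _
      rcases hτ i with h | h <;> rcases hσ i with h' | h' <;> rw [h, h'] <;> norm_num
    have hjval : τ j * σ j / 2 = -(1/2) := by
      rcases hτ j with h | h <;> rcases hσ j with h' | h' <;>
        first
          | (exfalso; rw [h, h'] at hj; exact hj rfl)
          | (rw [h, h']; norm_num)
    have hsum : ∑ i ∈ Finset.univ.erase j, τ i * σ i / 2
        ≤ (Finset.univ.erase j).card * (1/2) := by
      simpa using Finset.sum_le_card_nsmul _ _ _ hle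
    have hcard : ((Finset.univ.erase j).card : ℝ) = (d : ℝ) - 1 := by
      rw [Finset.card_erase_of_mem (Finset.mem_univ j), Finset.card_univ, Fintype.card_fin]
      have : 1 ≤ d := le_trans (by norm_num) hd
      push_cast [Nat.cast_sub this]
      ring
    rw [hcard] at hsum
    calc ∑ i, τ i * ((if σ i = 1 then (1:ℝ) else 0) - 1/2)
        = ∑ i, τ i * σ i / 2 := Finset.sum_congr rfl hterm
      _ = τ j * σ j / 2 + ∑ i ∈ Finset.univ.erase j, τ i * σ i / 2 :=
          (Finset.add_sum_erase _ _ (Finset.mem_univ j)).symm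
      _ ≤ -(1/2) + ((d:ℝ) - 1) * (1/2) := by rw [hjval]; linarith
      _ ≤ ((d : ℝ) - 1) / 2 := by linarith
end

section
/- Let K ⊆ ℝ^{d+1} be a convex cone contained in Q, the cone generated by 0-1 vectors with x_0 = 1. Define M(K) as the set of symmetric (d+1)×(d+1) matrices Y with Y e_0 = diag(Y), Y e_i ∈ K and Y(e_0 - e_i) ∈ K for all i ∈ {1,...,d}, and N(K) = {diag(Y) : Y ∈ M(K)}. Let F be a face of Q of the form Q ∩ {x : x_i = 0} or Q ∩ {x : x_i = x_0} (or an intersection of such). Then N(K ∩ F) = N(K) ∩ F. -/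
def coneQ (d : ℕ) : Set (Fin (d + 1) → ℝ) :=
  {x | ∀ i : Fin d, 0 ≤ x i.succ ∧ x i.succ ≤ x 0}

def LSM (d : ℕ) (K : Set (Fin (d + 1) → ℝ)) : Set (Matrix (Fin (d + 1)) (Fin (d + 1)) ℝ) :=
  {Y | Y.IsSymm ∧ Y.mulVec (Pi.single 0 1) = Matrix.diag Y ∧
    ∀ i : Fin d, Y.mulVec (Pi.single i.succ 1) ∈ K ∧
      Y.mulVec (Pi.single 0 1 - Pi.single i.succ 1) ∈ K}

def LSN (d : ℕ) (K : Set (Fin (d + 1) → ℝ)) : Set (Fin (d + 1) → ℝ) :=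
  {v | ∃ Y ∈ LSM d K, Matrix.diag Y = v}

lemma split_eq {d : ℕ} (Y : Matrix (Fin (d + 1)) (Fin (d + 1)) ℝ)
    (hdiag : Y.mulVec (Pi.single 0 1) = Matrix.diag Y) (i : Fin d) :
    Matrix.diag Y = Y.mulVec (Pi.single i.succ 1) +
      Y.mulVec (Pi.single 0 1 - Pi.single i.succ 1) := by
  rw [Matrix.mulVec_sub, ← hdiag]
  abel

theorem stmt15 (d : ℕ) (K : Set (Fin (d + 1) → ℝ)) (hKQ : K ⊆ coneQ d)
    (hKconv : Convex ℝ K) (hKcone : ∀ c : ℝ, 0 ≤ c → ∀ x ∈ K, c • x ∈ K)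
    (J0 J1 : Set (Fin d)) (F : Set (Fin (d + 1) → ℝ))
    (hF : F = coneQ d ∩ {x | ∀ i ∈ J0, x i.succ = 0} ∩ {x | ∀ i ∈ J1, x i.succ = x 0}) :
    LSN d (K ∩ F) = LSN d K ∩ F := by
  subst hF
  ext v
  constructor
  · rintro ⟨Y, ⟨hsym, hdiag, h⟩, rfl⟩
    refine ⟨⟨Y, ⟨hsym, hdiag, fun i => ⟨(h i).1.1, (h i).2.1⟩⟩, rfl⟩, ⟨?_, ?_⟩, ?_⟩
    · intro i
      have hs := split_eq Y hdiag i
      have ha := hKQ (h i).1.1 i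
      have hb := hKQ (h i).2.1 i
      have h1 : Matrix.diag Y i.succ = _ + _ := congrFun hs i.succ
      have h0 : Matrix.diag Y 0 = _ + _ := congrFun hs 0
      rw [h1, h0]
      exact ⟨add_nonneg ha.1 hb.1, add_le_add ha.2 hb.2⟩
    · intro i hi
      have hs := split_eq Y hdiag i
      have ha := (h i).1.2.1.2 i hi
      have hb := (h i).2.2.1.2 i hi
      have h1 : Matrix.diag Y i.succ = _ + _ := congrFun hs i.succ
      rw [h1, ha, hb, add_zero]
    · intro i hi
      have hs := split_eq Y hdiag i
      have ha := (h i).1.2.2 i hi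
      have hb := (h i).2.2.2 i hi
      have h1 : Matrix.diag Y i.succ = _ + _ := congrFun hs i.succ
      have h0 : Matrix.diag Y 0 = _ + _ := congrFun hs 0
      rw [h1, h0, ha, hb]
  · rintro ⟨⟨Y, ⟨hsym, hdiag, h⟩, rfl⟩, ⟨hQ, h0⟩, h1⟩
    refine ⟨Y, ⟨hsym, hdiag, fun i => ?_⟩, rfl⟩
    have ha := hKQ (h i).1
    have hb := hKQ (h i).2
    have hs := split_eq Y hdiag i
    constructor
    · refine ⟨(h i).1, ⟨ha, fun j hj => ?_⟩, fun j hj => ?_⟩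
      · have hsum : Matrix.diag Y j.succ = _ + _ := congrFun hs j.succ
        have := h0 j hj
        have := (ha j).1
        have := (hb j).1
        linarith
      · have hsum : Matrix.diag Y j.succ = _ + _ := congrFun hs j.succ
        have hsum0 : Matrix.diag Y 0 = _ + _ := congrFun hs 0
        have := h1 j hj
        have := (ha j).2
        have := (hb j).2
        linarith
    · refine ⟨(h i).2, ⟨hb, fun j hj => ?_⟩, fun j hj => ?_⟩
      · have hsum : Matrix.diag Y j.succ = _ + _ := congrFun hs j.succ
        have := h0 j hj
        have := (ha j).1
        have := (hb j).1
        linarith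
      · have hsum : Matrix.diag Y j.succ = _ + _ := congrFun hs j.succ
        have hsum0 : Matrix.diag Y 0 = _ + _ := congrFun hs 0
        have := h1 j hj
        have := (ha j).2
        have := (hb j).2
        linarith
end

section
/- With Q, M(K), N(K) as above, and additionally M_+(K) = {Y ∈ M(K) : Y positive semidefinite} and N_+(K) = {diag(Y) : Y ∈ M_+(K)}, let K ⊆ Q be a convex cone. Then for every i ∈ {1,...,d}: N_+(K) ⊆ N(K) ⊆ (K ∩ {x : x_i = 0}) + (K ∩ {x : x_i = x_0}), where + denotes the Minkowski sum of the two cones. -/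
open Pointwise

def LSMplus (d : ℕ) (K : Set (Fin (d + 1) → ℝ)) :
    Set (Matrix (Fin (d + 1)) (Fin (d + 1)) ℝ) :=
  {Y | Y ∈ LSM d K ∧ Y.PosSemidef}

def LSNplus (d : ℕ) (K : Set (Fin (d + 1) → ℝ)) : Set (Fin (d + 1) → ℝ) :=
  {v | ∃ Y ∈ LSMplus d K, Matrix.diag Y = v}

lemma LSNplus_subset_LSN (d : ℕ) (K : Set (Fin (d + 1) → ℝ)) : LSNplus d K ⊆ LSN d K :=
  fun _ ⟨Y, hY, hd⟩ => ⟨Y, hY.1, hd⟩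

namespace LSM

variable {d : ℕ} {K : Set (Fin (d + 1) → ℝ)} {Y : Matrix (Fin (d + 1)) (Fin (d + 1)) ℝ}

lemma apply_zero_eq_diag (hY : Y ∈ LSM d K) (j : Fin (d + 1)) : Y j 0 = Y j j := by
  simpa [Matrix.mulVec_single_one] using congrFun hY.2.1 j

lemma mulVec_single_succ_mem_face (hY : Y ∈ LSM d K) (i : Fin d) :
    Y.mulVec (Pi.single i.succ 1) ∈ K ∩ {x | x i.succ = x 0} := by
  refine ⟨(hY.2.2 i).1, ?_⟩
  simp [← apply_zero_eq_diag hY, hY.1.apply i.succ 0]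

lemma mulVec_sub_single_succ_mem_face (hY : Y ∈ LSM d K) (i : Fin d) :
    Y.mulVec (Pi.single 0 1 - Pi.single i.succ 1) ∈ K ∩ {x | x i.succ = 0} := by
  refine ⟨(hY.2.2 i).2, ?_⟩
  simp [Matrix.mulVec_sub, apply_zero_eq_diag hY]

end LSM

/-- Split `diag Y = Y e₀` as `Y (e₀ - eᵢ) + Y eᵢ`; the diagonal condition puts the summands on the
two faces `xᵢ = 0` and `xᵢ = x₀`. -/
lemma LSN_subset_add_faces (d : ℕ) (K : Set (Fin (d + 1) → ℝ)) (i : Fin d) :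
    LSN d K ⊆ (K ∩ {x | x i.succ = 0}) + (K ∩ {x | x i.succ = x 0}) := by
  rintro v ⟨Y, hY, rfl⟩
  refine ⟨_, LSM.mulVec_sub_single_succ_mem_face hY i, _, LSM.mulVec_single_succ_mem_face hY i, ?_⟩
  change Y.mulVec _ + Y.mulVec _ = _
  rw [← Matrix.mulVec_add, sub_add_cancel, hY.2.1]

theorem stmt16_general (d : ℕ) (K : Set (Fin (d + 1) → ℝ)) :
    ∀ i : Fin d, LSNplus d K ⊆ LSN d K ∧
      LSN d K ⊆ (K ∩ {x | x i.succ = 0}) + (K ∩ {x | x i.succ = x 0}) :=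
  fun i => ⟨LSNplus_subset_LSN d K, LSN_subset_add_faces d K i⟩

theorem stmt16 (d : ℕ) (K : Set (Fin (d + 1) → ℝ)) (hKQ : K ⊆ coneQ d)
    (hKconv : Convex ℝ K) (hKcone : ∀ c : ℝ, 0 ≤ c → ∀ x ∈ K, c • x ∈ K) :
    ∀ i : Fin d, LSNplus d K ⊆ LSN d K ∧
      LSN d K ⊆ (K ∩ {x | x i.succ = 0}) + (K ∩ {x | x i.succ = x 0}) :=
  stmt16_general d K
end

section
/- Let P ⊆ [0,1]^d be a convex set and let K = {(λ, λx) : x ∈ P, λ ≥ 0} ⊆ ℝ^{d+1} be its homogenization. Suppose x̄ ∈ P has the property that for every j with 0 < x̄_j < 1, both x̄^{(j)} ∈ P and x̄^{(j)} + e_j ∈ P, where x̄^{(j)} = x̄ − x̄_j e_j. Then there exists a symmetric positive semidefinite (d+1)×(d+1) matrix Y with Y e_0 = diag(Y) = (1, x̄), and Y e_i ∈ K, Y(e_0 − e_i) ∈ K for all i ∈ {1,...,d}; that is, x̄ ∈ N_+(P). -/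
/-!
Take for `Y` the moment matrix of the product of independent Bernoulli variables with means
`v = (1, x̄)`: it is `v vᵀ` with diagonal replaced by `v`. It is positive semidefinite as the sum
of `v vᵀ` and the diagonal matrix of variances `vᵢ (1 - vᵢ) ≥ 0`. Its column `i` is
`x̄ᵢ (1, x̄⁽ⁱ⁾ + eᵢ)` and `Y (e₀ - eᵢ)` is `(1 - x̄ᵢ) (1, x̄⁽ⁱ⁾)`; these lie in `K` by the hypothesis
when `0 < x̄ᵢ < 1`, and trivially when `x̄ᵢ ∈ {0, 1}`, where the scalar vanishes or the point is `x̄`.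
-/

def homog (d : ℕ) (P : Set (Fin d → ℝ)) : Set (Fin (d + 1) → ℝ) :=
  {y | ∃ (l : ℝ) (x : Fin d → ℝ), 0 ≤ l ∧ x ∈ P ∧ y = l • (Fin.cons 1 x : Fin (d + 1) → ℝ)}

open Matrix

namespace Matrix

variable {n : Type*} [DecidableEq n]

def bernoulliMoment (v : n → ℝ) : Matrix n n ℝ :=
  vecMulVec v v + diagonal fun i => v i * (1 - v i)

theorem bernoulliMoment_apply (v : n → ℝ) (i j : n) :
    bernoulliMoment v i j = v i * v j + if i = j then v i * (1 - v i) else 0 := by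
  simp [bernoulliMoment, vecMulVec_apply, diagonal_apply]

theorem bernoulliMoment_isSymm (v : n → ℝ) : (bernoulliMoment v).IsSymm := by
  refine IsSymm.add ?_ (isSymm_diagonal _)
  ext i j
  simp [vecMulVec_apply, mul_comm]

theorem diag_bernoulliMoment (v : n → ℝ) : diag (bernoulliMoment v) = v := by
  ext i
  rw [diag_apply, bernoulliMoment_apply, if_pos rfl]
  ring

variable [Fintype n]

theorem bernoulliMoment_posSemidef {v : n → ℝ} (hv : ∀ i, v i ∈ Set.Icc (0 : ℝ) 1) :
    (bernoulliMoment v).PosSemidef := by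
  refine PosSemidef.add (by simpa using posSemidef_vecMulVec_self_star v) ?_
  exact posSemidef_diagonal_iff.2 fun i => mul_nonneg (hv i).1 (sub_nonneg.2 (hv i).2)

theorem bernoulliMoment_mulVec_single (v : n → ℝ) (k : n) :
    bernoulliMoment v *ᵥ Pi.single k 1 = v k • v + (v k * (1 - v k)) • Pi.single k 1 := by
  ext i
  rw [mulVec_single_one, col_apply, bernoulliMoment_apply]
  by_cases h : i = k <;> simp [h, mul_comm]

end Matrix

section Homogenization

variable {d : ℕ} {P : Set (Fin d → ℝ)}

theorem bernoulliMoment_cons_mulVec_single_zero (x : Fin d → ℝ) :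
    bernoulliMoment (Fin.cons 1 x : Fin (d + 1) → ℝ) *ᵥ Pi.single 0 1 = Fin.cons 1 x := by
  rw [bernoulliMoment_mulVec_single]
  simp

theorem bernoulliMoment_cons_mulVec_single_succ (x : Fin d → ℝ) (i : Fin d) :
    bernoulliMoment (Fin.cons 1 x : Fin (d + 1) → ℝ) *ᵥ Pi.single i.succ 1 =
      x i • Fin.cons 1 (Function.update x i 1) := by
  rw [bernoulliMoment_mulVec_single, Fin.cons_update]
  ext k
  refine Fin.cases ?_ (fun j => ?_) k
  · simp [Function.update_of_ne (Fin.succ_ne_zero i).symm]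
  · by_cases hj : j = i
    · subst hj
      simp only [Fin.cons_succ, Pi.add_apply, Pi.smul_apply, smul_eq_mul, Pi.single_eq_same,
        mul_one, Function.update_self]
      ring
    · simp [hj]

theorem bernoulliMoment_cons_mulVec_zero_sub_succ (x : Fin d → ℝ) (i : Fin d) :
    bernoulliMoment (Fin.cons 1 x : Fin (d + 1) → ℝ) *ᵥ (Pi.single 0 1 - Pi.single i.succ 1) =
      (1 - x i) • Fin.cons 1 (Function.update x i 0) := by
  rw [mulVec_sub, bernoulliMoment_cons_mulVec_single_zero,
    bernoulliMoment_cons_mulVec_single_succ, Fin.cons_update, Fin.cons_update]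
  ext k
  refine Fin.cases ?_ (fun j => ?_) k
  · simp [Function.update_of_ne (Fin.succ_ne_zero i).symm]
  · by_cases hj : j = i
    · subst hj; simp
    · simp only [Pi.sub_apply, Pi.smul_apply, smul_eq_mul, Fin.cons_succ,
        Function.update_of_ne ((Fin.succ_injective d).ne hj)]
      ring

theorem smul_cons_mem_homog {l : ℝ} {y : Fin d → ℝ} (hP : P.Nonempty) (hl : 0 ≤ l)
    (hy : l = 0 ∨ y ∈ P) : l • (Fin.cons 1 y : Fin (d + 1) → ℝ) ∈ homog d P := by
  rcases hy with rfl | hy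
  · obtain ⟨x, hx⟩ := hP
    exact ⟨0, x, le_rfl, hx, by simp⟩
  · exact ⟨l, y, hl, hy, rfl⟩

end Homogenization

theorem stmt17_general (d : ℕ) (P : Set (Fin d → ℝ))
    (hPbox : ∀ x ∈ P, ∀ i, 0 ≤ x i ∧ x i ≤ 1)
    (xb : Fin d → ℝ) (hxb : xb ∈ P)
    (h : ∀ j : Fin d, 0 < xb j → xb j < 1 →
      Function.update xb j 0 ∈ P ∧ Function.update xb j 1 ∈ P) :
    ∃ Y : Matrix (Fin (d + 1)) (Fin (d + 1)) ℝ, Y.IsSymm ∧ Y.PosSemidef ∧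
      Y.mulVec (Pi.single 0 1) = Matrix.diag Y ∧
      Matrix.diag Y = Fin.cons 1 xb ∧
      ∀ i : Fin d, Y.mulVec (Pi.single i.succ 1) ∈ homog d P ∧
        Y.mulVec (Pi.single 0 1 - Pi.single i.succ 1) ∈ homog d P := by
  have hv : ∀ k, (Fin.cons 1 xb : Fin (d + 1) → ℝ) k ∈ Set.Icc (0 : ℝ) 1 :=
    Fin.cases (by simp) fun j => hPbox xb hxb j
  refine ⟨bernoulliMoment (Fin.cons 1 xb), bernoulliMoment_isSymm _,
    bernoulliMoment_posSemidef hv, by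
      rw [bernoulliMoment_cons_mulVec_single_zero, diag_bernoulliMoment],
    diag_bernoulliMoment _, fun i => ?_⟩
  obtain ⟨hi0, hi1⟩ := hPbox xb hxb i
  have hfaces : (xb i = 0 ∨ Function.update xb i 1 ∈ P) ∧
      (1 - xb i = 0 ∨ Function.update xb i 0 ∈ P) := by
    rcases hi0.eq_or_lt with hi0 | hi0
    · exact ⟨.inl hi0.symm, .inr (by rwa [Function.update_eq_self_iff.2 hi0])⟩
    rcases hi1.eq_or_lt with hi1 | hi1
    · exact ⟨.inr (by rwa [Function.update_eq_self_iff.2 hi1.symm]),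
        .inl (sub_eq_zero.2 hi1.symm)⟩
    · exact ⟨.inr (h i hi0 hi1).2, .inr (h i hi0 hi1).1⟩
  rw [bernoulliMoment_cons_mulVec_single_succ, bernoulliMoment_cons_mulVec_zero_sub_succ]
  exact ⟨smul_cons_mem_homog ⟨xb, hxb⟩ hi0 hfaces.1,
    smul_cons_mem_homog ⟨xb, hxb⟩ (sub_nonneg.2 hi1) hfaces.2⟩

theorem stmt17 (d : ℕ) (P : Set (Fin d → ℝ))
    (hPbox : ∀ x ∈ P, ∀ i, 0 ≤ x i ∧ x i ≤ 1) (hPconv : Convex ℝ P)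
    (xb : Fin d → ℝ) (hxb : xb ∈ P)
    (h : ∀ j : Fin d, 0 < xb j → xb j < 1 →
      Function.update xb j 0 ∈ P ∧ Function.update xb j 1 ∈ P) :
    ∃ Y : Matrix (Fin (d + 1)) (Fin (d + 1)) ℝ, Y.IsSymm ∧ Y.PosSemidef ∧
      Y.mulVec (Pi.single 0 1) = Matrix.diag Y ∧
      Matrix.diag Y = Fin.cons 1 xb ∧
      ∀ i : Fin d, Y.mulVec (Pi.single i.succ 1) ∈ homog d P ∧
        Y.mulVec (Pi.single 0 1 - Pi.single i.succ 1) ∈ homog d P :=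
  stmt17_general d P hPbox xb hxb h
end
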